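/- Let V be a braided vector space with braiding c satisfying c² = id_{V⊗V}, and let η : V ⊗ V → k be a linear functional such that (η⊗η)(id ⊗ c ⊗ id) = (η⊗η)(id ⊗ c ⊗ id)(c ⊗ c) on V^{⊗4} (equation (eq1)) and c(id ⊗ η) = (η ⊗ id)(id⊗c)(c⊗id) on V^{⊗3}. Then (η⊗η)(id ⊗ c ⊗ id)(c ⊗ id ⊗ id) = (η⊗η)(id ⊗ c ⊗ id)(id ⊗ id ⊗ c) on V^{⊗4}. -/
import Mathlib


open TensorProduct

noncomputable section Stmt15

variable (k V : Type*) [Field k] [AddCommGroup V] [Module k V]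

/-- The braiding applied to the first two factors of `V ⊗ V ⊗ V ⊗ V` (left-associated). -/
def c12 (c : V ⊗[k] V →ₗ[k] V ⊗[k] V) :
    ((V ⊗[k] V) ⊗[k] V) ⊗[k] V →ₗ[k] ((V ⊗[k] V) ⊗[k] V) ⊗[k] V :=
  TensorProduct.map (TensorProduct.map c LinearMap.id) LinearMap.id

/-- The braiding applied to the middle two factors of `V ⊗ V ⊗ V ⊗ V`, i.e. `id ⊗ c ⊗ id`. -/
def c23 (c : V ⊗[k] V →ₗ[k] V ⊗[k] V) :
    ((V ⊗[k] V) ⊗[k] V) ⊗[k] V →ₗ[k] ((V ⊗[k] V) ⊗[k] V) ⊗[k] V :=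
  TensorProduct.map
    ((TensorProduct.assoc k V V V).symm.toLinearMap ∘ₗ
      TensorProduct.map LinearMap.id c ∘ₗ (TensorProduct.assoc k V V V).toLinearMap)
    LinearMap.id

/-- The braiding applied to the last two factors of `V ⊗ V ⊗ V ⊗ V`. -/
def c34 (c : V ⊗[k] V →ₗ[k] V ⊗[k] V) :
    ((V ⊗[k] V) ⊗[k] V) ⊗[k] V →ₗ[k] ((V ⊗[k] V) ⊗[k] V) ⊗[k] V :=
  (TensorProduct.assoc k (V ⊗[k] V) V V).symm.toLinearMap ∘ₗ
    TensorProduct.map LinearMap.id c ∘ₗ (TensorProduct.assoc k (V ⊗[k] V) V V).toLinearMap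

/-- The functional `η ⊗ η : V^{⊗4} → k`, `a ⊗ b ⊗ c ⊗ d ↦ η(a,b)η(c,d)`. -/
def etaeta (η : V ⊗[k] V →ₗ[k] k) : ((V ⊗[k] V) ⊗[k] V) ⊗[k] V →ₗ[k] k :=
  LinearMap.mul' k k ∘ₗ TensorProduct.map η η ∘ₗ
    (TensorProduct.assoc k (V ⊗[k] V) V V).toLinearMap

/-- `id ⊗ η : V^{⊗3} → V`, `a ⊗ b ⊗ c ↦ η(b,c) a` (the left-hand side of (eq5)). -/
def lhs3 (η : V ⊗[k] V →ₗ[k] k) : (V ⊗[k] V) ⊗[k] V →ₗ[k] V :=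
  (TensorProduct.rid k V).toLinearMap ∘ₗ TensorProduct.map LinearMap.id η ∘ₗ
    (TensorProduct.assoc k V V V).toLinearMap

/-- `(η ⊗ id)(id ⊗ c)(c ⊗ id) : V^{⊗3} → V` (the right-hand side of (eq5)). -/
def rhs3 (c : V ⊗[k] V →ₗ[k] V ⊗[k] V) (η : V ⊗[k] V →ₗ[k] k) :
    (V ⊗[k] V) ⊗[k] V →ₗ[k] V :=
  (TensorProduct.lid k V).toLinearMap ∘ₗ TensorProduct.map η LinearMap.id ∘ₗ
    ((TensorProduct.assoc k V V V).symm.toLinearMap ∘ₗ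
      TensorProduct.map LinearMap.id c ∘ₗ (TensorProduct.assoc k V V V).toLinearMap) ∘ₗ
    TensorProduct.map c LinearMap.id

/-- Lemma 2.5 in the symmetric-braiding case: if `c² = id`, the functional `η` satisfies
(eq1): `(η⊗η)(id⊗c⊗id) = (η⊗η)(id⊗c⊗id)(c⊗c)` on `V^{⊗4}`, and
`c(id⊗η) = (η⊗id)(id⊗c)(c⊗id)` on `V^{⊗3}`, then
`(η⊗η)(id⊗c⊗id)(c⊗id⊗id) = (η⊗η)(id⊗c⊗id)(id⊗id⊗c)` on `V^{⊗4}` (eq2). -/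
theorem stmt15 (c : V ⊗[k] V →ₗ[k] V ⊗[k] V) (hc : c ∘ₗ c = LinearMap.id)
    (η : V ⊗[k] V →ₗ[k] k)
    (heq1 : etaeta k V η ∘ₗ c23 k V c
      = etaeta k V η ∘ₗ c23 k V c ∘ₗ (c12 k V c ∘ₗ c34 k V c))
    (heq5 : lhs3 k V η = rhs3 k V c η) :
    etaeta k V η ∘ₗ c23 k V c ∘ₗ c12 k V c = etaeta k V η ∘ₗ c23 k V c ∘ₗ c34 k V c := by
  have h34 : c34 k V c ∘ₗ c34 k V c = LinearMap.id := by
    unfold c34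
    have hidc : (TensorProduct.map (LinearMap.id : (V ⊗[k] V) →ₗ[k] _) c) ∘ₗ
        (TensorProduct.map LinearMap.id c) = LinearMap.id := by
      rw [← TensorProduct.map_comp, hc, LinearMap.id_comp, TensorProduct.map_id]
    refine LinearMap.ext fun x => ?_
    simp only [LinearMap.comp_apply, LinearEquiv.coe_coe, LinearEquiv.apply_symm_apply]
    rw [← LinearMap.comp_apply (TensorProduct.map _ _), hidc]
    exact (TensorProduct.assoc k (V ⊗[k] V) V V).symm_apply_apply x
  have h := congrArg (fun f => f ∘ₗ c34 k V c) heq1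
  simp only [LinearMap.comp_assoc] at h
  rw [h34, LinearMap.comp_id] at h
  exact h.symm

end Stmt15
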